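/- (Oracle property of the hard-threshold penalized QMLE in the location model.) Let β₀ > 0, let (X_n) be real random variables such that √n(X_n − β₀) converges in distribution to N(0,1), and let λ_n > 0 with λ_n → 0 as n → ∞. For each n let β̂_n be any global maximizer over [0, ∞) of the hard-threshold penalized criterion β ↦ −(n/2)(β − X_n)² − n·p_H(β;λ_n). Then P(β̂_n = X_n) → 1 and √n(β̂_n − β₀) converges in distribution to N(0,1); i.e., the penalization vanishes asymptotically for β₀ > 0 and the penalized estimator attains the same Gaussian limit as the unpenalized estimator. -/

import Mathlib

open MeasureTheory Filter Topology ProbabilityTheory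

/-- The hard-threshold penalty `p_H(b;λ) = λ² − (b−λ)²·1{0 ≤ b < λ}`. -/
noncomputable def pHard (lam b : ℝ) : ℝ :=
  lam ^ 2 - (b - lam) ^ 2 * (if 0 ≤ b ∧ b < lam then 1 else 0)

/-- Convergence in distribution: weak convergence of Borel probability measures on `ℝ`,
i.e. convergence of integrals of bounded continuous functions. -/
def TendstoInDistribution (μs : ℕ → Measure ℝ) (ν : Measure ℝ) : Prop :=
  ∀ f : BoundedContinuousFunction ℝ ℝ,
    Tendsto (fun n => ∫ x, f x ∂(μs n)) atTop (𝓝 (∫ x, f x ∂ν))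

open scoped ENNReal NNReal

lemma hard_max_eq (n : ℕ) (hn : 1 ≤ n) {lam X b : ℝ} (hlam : 0 < lam)
    (hX : Real.sqrt 2 * lam < X) (hb : 0 ≤ b)
    (hmax : IsMaxOn (fun β => -((n : ℝ) / 2) * (β - X) ^ 2 - n * pHard lam β)
      (Set.Ici (0:ℝ)) b) : b = X := by
  have h2 : Real.sqrt 2 ^ 2 = 2 := Real.sq_sqrt (by norm_num)
  have h1 : (1:ℝ) ≤ Real.sqrt 2 := by nlinarith [Real.sqrt_nonneg 2]
  have hXlam : lam < X := lt_of_le_of_lt (by nlinarith) hX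
  have hX0 : (0:ℝ) < X := lt_trans hlam hXlam
  have hn1 : (1:ℝ) ≤ (n:ℝ) := by exact_mod_cast hn
  by_contra hne
  have hQX : -((n : ℝ) / 2) * (X - X) ^ 2 - n * pHard lam X = -(n:ℝ) * lam ^ 2 := by
    have hc : ¬(0 ≤ X ∧ X < lam) := fun h' => absurd h'.2 (not_lt.mpr hXlam.le)
    rw [pHard, if_neg hc]; ring
  have hle := hmax (Set.mem_Ici.mpr (le_of_lt hX0))
  simp only [Set.mem_setOf_eq, hQX] at hle
  rcases lt_or_ge b lam with hblam | hblam
  · have hp : pHard lam b = lam ^ 2 - (b - lam) ^ 2 := by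
      rw [pHard, if_pos ⟨hb, hblam⟩]; ring
    rw [hp] at hle
    have hpos : (0:ℝ) ≤ Real.sqrt 2 * (lam - b) := by nlinarith
    have hkey : Real.sqrt 2 * (lam - b) < X - b := by nlinarith
    have hsq : 2 * (lam - b) ^ 2 < (X - b) ^ 2 := by nlinarith
    nlinarith [mul_lt_mul_of_pos_left hsq (show (0:ℝ) < (n:ℝ)/2 by positivity)]
  · have hp : pHard lam b = lam ^ 2 := by
      have hc : ¬(0 ≤ b ∧ b < lam) := fun h' => absurd h'.2 (not_lt.mpr hblam)
      rw [pHard, if_neg hc]; ring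
    rw [hp] at hle
    have h0 : 0 < (b - X) ^ 2 :=
      lt_of_le_of_ne (sq_nonneg _) (Ne.symm (pow_ne_zero 2 (sub_ne_zero.mpr hne)))
    nlinarith


/-- Tail bump function: 0 for |x| ≤ M, 1 for |x| ≥ M+1. -/
noncomputable def tailFn (M : ℝ) : BoundedContinuousFunction ℝ ℝ :=
  ⟨⟨fun x => max 0 (min 1 (|x| - M)),
    continuous_const.max (continuous_const.min (continuous_abs.sub continuous_const))⟩, 1, by
    intro x y
    have hx0 : 0 ≤ max 0 (min 1 (|x| - M)) := le_max_left _ _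
    have hx1 : max 0 (min 1 (|x| - M)) ≤ 1 :=
      max_le zero_le_one (min_le_left _ _)
    have hy0 : 0 ≤ max 0 (min 1 (|y| - M)) := le_max_left _ _
    have hy1 : max 0 (min 1 (|y| - M)) ≤ 1 :=
      max_le zero_le_one (min_le_left _ _)
    rw [Real.dist_eq, abs_sub_le_iff]
    constructor <;> linarith⟩

lemma tailFn_nonneg (M x : ℝ) : 0 ≤ tailFn M x := le_max_left _ _

lemma tailFn_le_one (M x : ℝ) : tailFn M x ≤ 1 := max_le zero_le_one (min_le_left _ _)

lemma tailFn_eq_one {M x : ℝ} (h : M + 1 ≤ |x|) : tailFn M x = 1 := by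
  show max 0 (min 1 (|x| - M)) = 1
  rw [min_eq_left (by linarith)]
  exact max_eq_right zero_le_one

lemma tailFn_eq_zero {M x : ℝ} (h : |x| < M) : tailFn M x = 0 := by
  show max 0 (min 1 (|x| - M)) = 0
  rw [min_eq_right (by linarith)]
  exact max_eq_left (by linarith)

lemma tendsto_prob_aux {Ω : Type*} [MeasurableSpace Ω]
    (P : Measure Ω) [IsProbabilityMeasure P] (β₀ : ℝ)
    (X : ℕ → Ω → ℝ) (hX : ∀ n, Measurable (X n))
    (h : ∀ f : BoundedContinuousFunction ℝ ℝ,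
      Tendsto (fun n : ℕ => ∫ x, f x ∂(P.map (fun ω => Real.sqrt n * (X n ω - β₀)))) atTop
        (𝓝 (∫ x, f x ∂(gaussianReal 0 1))))
    {ε : ℝ} (hε : 0 < ε) :
    Tendsto (fun n => P {ω | ε ≤ |X n ω - β₀|}) atTop (𝓝 0) := by
  set ν : Measure ℝ := gaussianReal 0 1
  rw [ENNReal.tendsto_nhds_zero]
  intro δ hδ
  obtain ⟨r, hr0, hrδ⟩ := ENNReal.lt_iff_exists_nnreal_btwn.mp hδ
  have hr0' : (0:ℝ) < r := by exact_mod_cast hr0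
  -- tails of ν tend to 0
  have htail : Tendsto (fun M : ℕ => ν {x : ℝ | (M:ℝ) ≤ |x|}) atTop (𝓝 0) := by
    have hmeas : ∀ M : ℕ, NullMeasurableSet {x : ℝ | (M:ℝ) ≤ |x|} ν := by
      intro M
      exact (measurableSet_le measurable_const measurable_abs).nullMeasurableSet
    have hanti : Antitone (fun M : ℕ => {x : ℝ | (M:ℝ) ≤ |x|}) := by
      intro a b hab x hx
      simp only [Set.mem_setOf_eq] at *
      exact le_trans (by exact_mod_cast hab) hx
    have := tendsto_measure_iInter_atTop hmeas hanti ⟨0, measure_ne_top _ _⟩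
    have hempty : (⋂ M : ℕ, {x : ℝ | (M:ℝ) ≤ |x|}) = ∅ := by
      ext x
      simp only [Set.mem_iInter, Set.mem_setOf_eq, Set.mem_empty_iff_false, iff_false, not_forall,
        not_le]
      obtain ⟨M, hM⟩ := exists_nat_gt |x|
      exact ⟨M, hM⟩
    rwa [hempty, measure_empty] at this
  obtain ⟨M, hM⟩ := (htail.eventually_lt_const
    (show (0:ℝ≥0∞) < ENNReal.ofReal (r/2) by simp [hr0'])).exists
  -- ∫ tailFn M dν ≤ r/2
  have hint_ν : ∫ x, tailFn M x ∂ν ≤ r/2 := by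
    have hle : ∀ x, tailFn M x ≤ Set.indicator {x : ℝ | (M:ℝ) ≤ |x|} (fun _ => (1:ℝ)) x := by
      intro x
      by_cases hx : (M:ℝ) ≤ |x|
      · rw [Set.indicator_of_mem (show x ∈ {x : ℝ | (M:ℝ) ≤ |x|} from hx)]
        exact tailFn_le_one _ _
      · rw [Set.indicator_of_notMem (show x ∉ {x : ℝ | (M:ℝ) ≤ |x|} from hx)]
        rw [tailFn_eq_zero (not_le.mp hx)]
    have hmeas : MeasurableSet {x : ℝ | (M:ℝ) ≤ |x|} :=
      measurableSet_le measurable_const measurable_abs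
    calc ∫ x, tailFn M x ∂ν ≤ ∫ x, Set.indicator {x : ℝ | (M:ℝ) ≤ |x|} (fun _ => (1:ℝ)) x ∂ν :=
          integral_mono ((tailFn M).integrable ν) ((integrable_const _).indicator hmeas) hle
      _ = (ν {x : ℝ | (M:ℝ) ≤ |x|}).toReal • (1:ℝ) := integral_indicator_const _ hmeas
      _ ≤ r/2 := by
          rw [smul_eq_mul, mul_one]
          exact ENNReal.toReal_le_of_le_ofReal (by positivity) hM.le
  -- eventually ∫ tailFn M dμ_n < r
  have h1 : ∀ᶠ n : ℕ in atTop,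
      ∫ x, tailFn M x ∂(P.map (fun ω => Real.sqrt n * (X n ω - β₀))) < r :=
    (h (tailFn M)).eventually_lt_const (by linarith)
  -- eventually sqrt n * ε ≥ M + 1
  have h2 : ∀ᶠ n : ℕ in atTop, ((M:ℝ) + 1) / ε ≤ Real.sqrt n := by
    have hs : Tendsto (fun n : ℕ => Real.sqrt n) atTop atTop := by
      refine tendsto_atTop_atTop.mpr fun b => ⟨⌈b * b⌉₊, fun n hn => ?_⟩
      rcases le_or_gt b 0 with hb | hb
      · exact le_trans hb (Real.sqrt_nonneg _)
      · have h1 : b * b ≤ (n : ℝ) :=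
          le_trans (Nat.le_ceil _) (by exact_mod_cast hn)
        calc b = Real.sqrt (b * b) := (Real.sqrt_mul_self hb.le).symm
          _ ≤ Real.sqrt n := Real.sqrt_le_sqrt h1
    exact hs.eventually_ge_atTop _
  filter_upwards [h1, h2] with n hn1 hn2
  set Y : Ω → ℝ := fun ω => Real.sqrt n * (X n ω - β₀) with hY
  have hYm : Measurable Y := (measurable_const.mul ((hX n).sub measurable_const))
  haveI : IsProbabilityMeasure (P.map Y) := Measure.isProbabilityMeasure_map hYm.aemeasurable
  have hMeps : (M:ℝ) + 1 ≤ Real.sqrt n * ε := by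
    rw [div_le_iff₀ hε] at hn2; linarith [mul_comm (Real.sqrt n) ε]
  have hsub : {ω | ε ≤ |X n ω - β₀|} ⊆ Y ⁻¹' {y : ℝ | (M:ℝ) + 1 ≤ |y|} := by
    intro ω hω
    simp only [Set.mem_setOf_eq, Set.mem_preimage, hY] at *
    rw [abs_mul, abs_of_nonneg (Real.sqrt_nonneg _)]
    calc (M:ℝ) + 1 ≤ Real.sqrt n * ε := hMeps
      _ ≤ Real.sqrt n * |X n ω - β₀| := by
          apply mul_le_mul_of_nonneg_left hω (Real.sqrt_nonneg _)
  have hmeasS : MeasurableSet {y : ℝ | (M:ℝ) + 1 ≤ |y|} :=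
    measurableSet_le measurable_const measurable_abs
  calc P {ω | ε ≤ |X n ω - β₀|} ≤ P (Y ⁻¹' {y : ℝ | (M:ℝ) + 1 ≤ |y|}) := measure_mono hsub
    _ = (P.map Y) {y : ℝ | (M:ℝ) + 1 ≤ |y|} := (Measure.map_apply hYm hmeasS).symm
    _ ≤ ENNReal.ofReal (∫ x, tailFn M x ∂(P.map Y)) := by
        have hge : ∀ x, Set.indicator {y : ℝ | (M:ℝ) + 1 ≤ |y|} (fun _ => (1:ℝ)) x ≤ tailFn M x := by
          intro x
          by_cases hx : (M:ℝ) + 1 ≤ |x|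
          · rw [Set.indicator_of_mem (show x ∈ {y : ℝ | (M:ℝ) + 1 ≤ |y|} from hx),
              tailFn_eq_one hx]
          · rw [Set.indicator_of_notMem (show x ∉ {y : ℝ | (M:ℝ) + 1 ≤ |y|} from hx)]
            exact tailFn_nonneg _ _
        have : ((P.map Y) {y : ℝ | (M:ℝ) + 1 ≤ |y|}).toReal ≤ ∫ x, tailFn M x ∂(P.map Y) := by
          calc ((P.map Y) {y : ℝ | (M:ℝ) + 1 ≤ |y|}).toReal
              = ∫ x, Set.indicator {y : ℝ | (M:ℝ) + 1 ≤ |y|} (fun _ => (1:ℝ)) x ∂(P.map Y) := by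
                rw [integral_indicator_const _ hmeasS, smul_eq_mul, mul_one, Measure.real]
            _ ≤ ∫ x, tailFn M x ∂(P.map Y) :=
                integral_mono ((integrable_const _).indicator hmeasS)
                  ((tailFn M).integrable _) hge
        rw [← ENNReal.ofReal_toReal (measure_ne_top (P.map Y) _)]
        exact ENNReal.ofReal_le_ofReal this
    _ ≤ δ := by
        refine le_trans (le_trans (ENNReal.ofReal_le_ofReal hn1.le) ?_) hrδ.le
        rw [ENNReal.ofReal_coe_nnreal]


lemma bcf_comp_integrable {Ω : Type*} [MeasurableSpace Ω] (P : MeasureTheory.Measure Ω)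
    [IsFiniteMeasure P] (f : BoundedContinuousFunction ℝ ℝ) {g : Ω → ℝ} (hg : Measurable g) :
    Integrable (fun ω => f (g ω)) P :=
  Integrable.mono' (integrable_const ‖f‖)
    (f.continuous.measurable.comp hg).aestronglyMeasurable
    (Filter.Eventually.of_forall fun ω => f.norm_coe_le_norm _)


/-- (Oracle property of the hard-threshold penalized QMLE in the
location model.) Let `β₀ > 0`, let `(X_n)` be real random variables with
`√n(X_n − β₀) ⇝ N(0,1)`, and let `λ_n > 0` with `λ_n → 0`. For each `n` let `β̂_n` be any
global maximizer over `[0, ∞)` of `β ↦ −(n/2)(β − X_n)² − n·p_H(β;λ_n)`. Then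
`P(β̂_n = X_n) → 1` and `√n(β̂_n − β₀) ⇝ N(0,1)`: the penalization vanishes asymptotically
for `β₀ > 0` and the penalized estimator attains the same Gaussian limit as the
unpenalized estimator. -/
theorem location_hard_threshold_oracle {Ω : Type*} [MeasurableSpace Ω]
    (P : Measure Ω) [IsProbabilityMeasure P]
    (β₀ : ℝ) (hβ₀ : 0 < β₀)
    (X : ℕ → Ω → ℝ) (hX : ∀ n, Measurable (X n))
    (h : TendstoInDistribution
      (fun n => P.map (fun ω => Real.sqrt n * (X n ω - β₀))) (gaussianReal 0 1))
    (lam : ℕ → ℝ) (hlampos : ∀ n, 0 < lam n) (hlam : Tendsto lam atTop (𝓝 0))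
    (βhat : ℕ → Ω → ℝ) (hβhatmeas : ∀ n, Measurable (βhat n))
    (hβhat : ∀ n ω, βhat n ω ∈ Set.Ici (0 : ℝ) ∧
      IsMaxOn (fun β => -((n : ℝ) / 2) * (β - X n ω) ^ 2 - n * pHard (lam n) β)
        (Set.Ici (0 : ℝ)) (βhat n ω)) :
    Tendsto (fun n => P {ω | βhat n ω = X n ω}) atTop (𝓝 1) ∧
    TendstoInDistribution
      (fun n => P.map (fun ω => Real.sqrt n * (βhat n ω - β₀))) (gaussianReal 0 1)  := by
  have hprob : ∀ ε : ℝ, 0 < ε →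
      Tendsto (fun n => P {ω | ε ≤ |X n ω - β₀|}) atTop (𝓝 0) :=
    fun ε hε => tendsto_prob_aux P β₀ X hX h hε
  have hsub : ∀ n : ℕ, 1 ≤ n →
      {ω | Real.sqrt 2 * lam n < X n ω} ⊆ {ω | βhat n ω = X n ω} := by
    intro n hn ω hω
    exact hard_max_eq n hn (hlampos n) hω (hβhat n ω).1 (hβhat n ω).2
  have hCmeas : ∀ n, MeasurableSet {ω | X n ω ≤ Real.sqrt 2 * lam n} :=
    fun n => measurableSet_le (hX n) measurable_const
  have hC : Tendsto (fun n => P {ω | X n ω ≤ Real.sqrt 2 * lam n}) atTop (𝓝 0) := by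
    have hε := hprob (β₀ / 2) (by linarith)
    have hlam2 : Tendsto (fun n => Real.sqrt 2 * lam n) atTop (𝓝 0) := by
      simpa using hlam.const_mul (Real.sqrt 2)
    have hev : ∀ᶠ n in atTop, Real.sqrt 2 * lam n < β₀ / 2 :=
      hlam2.eventually_lt_const (by linarith)
    refine tendsto_of_tendsto_of_tendsto_of_le_of_le'
      (tendsto_const_nhds : Tendsto (fun _ : ℕ => (0 : ℝ≥0∞)) atTop (𝓝 0)) hε
      (Filter.Eventually.of_forall fun n => zero_le) ?_
    filter_upwards [hev] with n hn
    refine measure_mono fun ω hω => ?_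
    simp only [Set.mem_setOf_eq] at *
    have : X n ω ≤ β₀ / 2 := le_trans hω hn.le
    rw [abs_sub_comm]
    exact le_abs.mpr (Or.inl (by linarith))
  have hE : Tendsto (fun n => P {ω | Real.sqrt 2 * lam n < X n ω}) atTop (𝓝 1) := by
    have heq : ∀ n, P {ω | Real.sqrt 2 * lam n < X n ω}
        = 1 - P {ω | X n ω ≤ Real.sqrt 2 * lam n} := by
      intro n
      rw [← prob_compl_eq_one_sub (hCmeas n)]
      congr 1
      ext ω
      simp [not_le]
    simp only [heq]
    have := ENNReal.Tendsto.sub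
      (tendsto_const_nhds : Tendsto (fun _ : ℕ => (1 : ℝ≥0∞)) atTop (𝓝 1)) hC
      (Or.inl ENNReal.one_ne_top)
    simpa using this
  have part1 : Tendsto (fun n => P {ω | βhat n ω = X n ω}) atTop (𝓝 1) := by
    refine tendsto_of_tendsto_of_tendsto_of_le_of_le' hE
      (tendsto_const_nhds : Tendsto (fun _ : ℕ => (1 : ℝ≥0∞)) atTop (𝓝 1)) ?_
      (Filter.Eventually.of_forall fun n => prob_le_one)
    filter_upwards [eventually_ge_atTop 1] with n hn
    exact measure_mono (hsub n hn)
  refine ⟨part1, ?_⟩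
  intro f
  have hSmeas : ∀ n, MeasurableSet {ω | ¬ βhat n ω = X n ω} :=
    fun n => (measurableSet_eq_fun (hβhatmeas n) (hX n)).compl
  have hne : Tendsto (fun n => P {ω | ¬ βhat n ω = X n ω}) atTop (𝓝 0) := by
    have heq : ∀ n, P {ω | ¬ βhat n ω = X n ω} = 1 - P {ω | βhat n ω = X n ω} := by
      intro n
      rw [← prob_compl_eq_one_sub (measurableSet_eq_fun (hβhatmeas n) (hX n))]
      rfl
    simp only [heq]
    have := ENNReal.Tendsto.sub
      (tendsto_const_nhds : Tendsto (fun _ : ℕ => (1 : ℝ≥0∞)) atTop (𝓝 1)) part1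
      (Or.inl ENNReal.one_ne_top)
    simpa using this
  have hreal : Tendsto (fun n => (P {ω | ¬ βhat n ω = X n ω}).toReal) atTop (𝓝 0) := by
    have := (ENNReal.tendsto_toReal (by simp : (0:ℝ≥0∞) ≠ ⊤)).comp hne
    exact this
  have key : ∀ n : ℕ,
      ‖(∫ x, f x ∂(P.map (fun ω => Real.sqrt n * (βhat n ω - β₀))))
        - ∫ x, f x ∂(P.map (fun ω => Real.sqrt n * (X n ω - β₀)))‖
      ≤ 2 * ‖f‖ * (P {ω | ¬ βhat n ω = X n ω}).toReal := by
    intro n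
    set Y' : Ω → ℝ := fun ω => Real.sqrt n * (βhat n ω - β₀) with hY'
    set Y : Ω → ℝ := fun ω => Real.sqrt n * (X n ω - β₀) with hYdef
    have hY'm : Measurable Y' := measurable_const.mul ((hβhatmeas n).sub measurable_const)
    have hYm : Measurable Y := measurable_const.mul ((hX n).sub measurable_const)
    rw [integral_map hY'm.aemeasurable f.continuous.aestronglyMeasurable,
      integral_map hYm.aemeasurable f.continuous.aestronglyMeasurable]
    have hint1 : Integrable (fun ω => f (Y' ω)) P := bcf_comp_integrable P f hY'm
    have hint2 : Integrable (fun ω => f (Y ω)) P := bcf_comp_integrable P f hYm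
    rw [← integral_sub hint1 hint2]
    set S := {ω | ¬ βhat n ω = X n ω} with hSdef
    have hS : MeasurableSet S := hSmeas n
    calc ‖∫ ω, (f (Y' ω) - f (Y ω)) ∂P‖
        ≤ ∫ ω, ‖f (Y' ω) - f (Y ω)‖ ∂P := norm_integral_le_integral_norm _
      _ ≤ ∫ ω, S.indicator (fun _ => 2 * ‖f‖) ω ∂P := by
          refine integral_mono (hint1.sub hint2).norm
            ((integrable_const _).indicator hS) fun ω => ?_
          by_cases hω : βhat n ω = X n ω
          · have hmem : ω ∉ S := fun hc => hc hω
            rw [Set.indicator_of_notMem hmem]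
            have : Y' ω = Y ω := by simp only [hY', hYdef, hω]
            simp [this]
          · rw [Set.indicator_of_mem (show ω ∈ S from hω)]
            calc ‖f (Y' ω) - f (Y ω)‖ ≤ ‖f (Y' ω)‖ + ‖f (Y ω)‖ := norm_sub_le _ _
              _ ≤ 2 * ‖f‖ := by
                  have h1 := f.norm_coe_le_norm (Y' ω)
                  have h2 := f.norm_coe_le_norm (Y ω)
                  linarith
      _ = 2 * ‖f‖ * (P S).toReal := by
          rw [integral_indicator_const _ hS, smul_eq_mul, Measure.real]
          ring
  have hdiff : Tendsto (fun n : ℕ =>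
      (∫ x, f x ∂(P.map (fun ω => Real.sqrt n * (βhat n ω - β₀))))
        - ∫ x, f x ∂(P.map (fun ω => Real.sqrt n * (X n ω - β₀)))) atTop (𝓝 0) := by
    refine squeeze_zero_norm key ?_
    simpa using hreal.const_mul (2 * ‖f‖)
  have := (h f).add hdiff
  simp only [add_zero] at this
  convert this using 2 with n
  ring
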